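/- Fix i ∈ ℕ and assume 𝒳̂^i(0) = γ·Id, where 𝒳̂^i(λ) = ∏_{j=i}^{N+i−1} B̂^j(λ). Let (â_k : k ≥ 0) be positive reals with â_k → ∞, and set Ĉ^i_k(λ) = â_k·(𝒳̂^i(λ/â_k) − γ·Id). Define the matrix-valued function 𝒞̂^i(λ) = λ·[[ −(α_{i−1}/α_i)·(w_{N−2}^{[i+1]})′(0), (w_{N−1}^{[i]})′(0) ], [ −(α_{i−1}/α_i)·(w_{N−1}^{[i+1]})′(0), (w_N^{[i]})′(0) ]]. Then for every compact set K ⊂ ℂ: (1) Ĉ^i_k → 𝒞̂^i uniformly on K as k → ∞; (2) there exists a constant c > 0 such that sup_{λ∈K} ‖Ĉ^i_{k+1}(λ) − Ĉ^i_k(λ)‖ ≤ c·|1/â_{k+1} − 1/â_k| for all k ≥ 0, where ‖·‖ is the operator norm on 2×2 complex matrices. -/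

import Mathlib

/-!
By the three-term recurrence, the transfer-matrix product over a period is the polynomial matrix
`P(λ) = [[c w_{N-2}^{[i+1]}, w_{N-1}^{[i]}], [c w_{N-1}^{[i+1]}, w_N^{[i]}]]`, `c = -α_{i-1}/α_i`.
As `P(0) = γ Id`, we get `Ĉ_k(λ) = λ D(λ/â_k)` for the polynomial matrix `D = (P(x) - P(0))/x`,
while `𝒞̂(λ) = λ P'(0) = λ D(0)`. The map `(λ, t) ↦ λ D(λ t)` is smooth, hence Lipschitz on the
compact set `K × {|t| ≤ T}`, where `T` bounds `1/â_k`. Taking `t = 1/â_k` gives the Lipschitz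
estimate, and since `1/â_k → 0` also the uniform convergence.
-/

open scoped Matrix.Norms.L2Operator

/-- The product `C (n₀ + len - 1) * ⋯ * C n₀` of complex matrices, with larger indices on the
left; equal to the identity when `len = 0`. -/
noncomputable def prodDescC (C : ℤ → Matrix (Fin 2) (Fin 2) ℂ) (n₀ : ℤ) : ℕ → Matrix (Fin 2) (Fin 2) ℂ
  | 0 => 1
  | len + 1 => C (n₀ + len) * prodDescC C n₀ len

/-- The complex transfer matrix `B̂^j(λ)` associated with the sequences `α`, `β`. -/
noncomputable def transferMatrixC (α β : ℤ → ℝ) (j : ℤ) (z : ℂ) : Matrix (Fin 2) (Fin 2) ℂ :=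
  !![0, 1; (-(α (j - 1) / α j) : ℝ), (z - (β j : ℂ)) / (α j : ℂ)]

open Polynomial

theorem aeval_sub_aeval_zero {R A : Type*} [CommSemiring R] [CommRing A] [Algebra R A]
    (p : R[X]) (x : A) : aeval x p - aeval 0 p = x * aeval x p.divX := by
  have h : aeval x p = aeval x (X * p.divX + C (p.coeff 0)) := by rw [X_mul_divX_add]
  rw [h, ← coeff_zero_eq_aeval_zero', map_add, map_mul, aeval_X, aeval_C]
  ring

theorem aeval_zero_divX {R A : Type*} [CommSemiring R] [CommSemiring A] [Algebra R A]
    (p : R[X]) : aeval (0 : A) p.divX = algebraMap R A (p.coeff 1) := by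
  rw [← coeff_zero_eq_aeval_zero', coeff_divX]

theorem eval_zero_derivative {R : Type*} [Semiring R] (p : R[X]) :
    p.derivative.eval 0 = p.coeff 1 := by
  simp [← coeff_zero_eq_eval_zero, coeff_derivative]

theorem smul_map_aeval_div_sub_map_aeval_zero {R K m n : Type*} [CommSemiring R] [Field K]
    [Algebra R K] (P : Matrix m n R[X]) {a : K} (ha : a ≠ 0) (z : K) :
    a • (P.map (aeval (z / a)) - P.map (aeval 0)) = z • (P.map divX).map (aeval (z / a)) := by
  ext i j
  simp only [Matrix.smul_apply, Matrix.sub_apply, Matrix.map_apply, smul_eq_mul,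
    aeval_sub_aeval_zero, ← mul_assoc, mul_div_cancel₀ z ha]

section L2Operator

variable {m n : Type*} [Fintype m] [Fintype n] [DecidableEq n]

theorem contDiff_map_aeval (P : Matrix m n ℝ[X]) (k : WithTop ℕ∞) :
    ContDiff ℂ k fun w : ℂ => P.map (aeval w) := by
  classical
  have hsum : (fun w : ℂ => P.map (aeval w))
      = fun w => ∑ a, ∑ b, aeval w (P a b) • Matrix.single a b (1 : ℂ) := by
    ext w a' b'
    conv_lhs => rw [Matrix.matrix_eq_sum_single (P.map (aeval w))]
    simp
  rw [hsum]
  refine ContDiff.sum fun a _ => ContDiff.sum fun b _ => ?_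
  exact (contDiff_aeval (𝕜 := ℂ) (P a b) k).smul
    (contDiff_const (c := (Matrix.single a b 1 : Matrix m n ℂ)))

theorem exists_norm_smul_map_aeval_mul_sub_le (D : Matrix m n ℝ[X]) {K : Set ℂ}
    (hK : IsCompact K) (T : ℝ) :
    ∃ c > 0, ∀ z ∈ K, ∀ t t' : ℝ, |t| ≤ T → |t'| ≤ T →
      ‖z • D.map (aeval (z * t)) - z • D.map (aeval (z * t'))‖ ≤ c * |t - t'| := by
  set g : ℂ × ℂ → Matrix m n ℂ := fun p => p.1 • D.map (aeval (p.1 * p.2))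
  have hg : ContDiff ℂ 1 g :=
    contDiff_fst.smul ((contDiff_map_aeval D 1).comp (contDiff_fst.mul contDiff_snd))
  obtain ⟨L, hL⟩ := hg.locallyLipschitz.locallyLipschitzOn.exists_lipschitzOnWith_of_compact
    (hK.prod (isCompact_closedBall (0 : ℂ) T))
  refine ⟨L + 1, by positivity, fun z hz t t' ht ht' => ?_⟩
  have hmem : ∀ s : ℝ, |s| ≤ T → ((z, (s : ℂ)) : ℂ × ℂ) ∈ K ×ˢ Metric.closedBall 0 T :=
    fun s hs => ⟨hz, by simpa using hs⟩
  calc ‖g (z, t) - g (z, t')‖ = dist (g (z, t)) (g (z, t')) := (dist_eq_norm _ _).symm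
    _ ≤ L * dist ((z, (t : ℂ)) : ℂ × ℂ) (z, (t' : ℂ)) := hL.dist_le_mul _ (hmem t ht) _ (hmem t' ht')
    _ = L * |t - t'| := by simp [dist_eq_norm, ← Complex.ofReal_sub]
    _ ≤ (L + 1) * |t - t'| := by gcongr; linarith

end L2Operator

theorem tendstoUniformlyOn_of_norm_sub_le {ι α E : Type*} [SeminormedAddCommGroup E]
    {l : Filter ι} {F : ι → α → E} {f : α → E} {s : Set α} {u : ι → ℝ}
    (hu : Filter.Tendsto u l (nhds 0)) (h : ∀ i, ∀ x ∈ s, ‖F i x - f x‖ ≤ u i) :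
    TendstoUniformlyOn F f l s := by
  rw [Metric.tendstoUniformlyOn_iff]
  intro ε hε
  filter_upwards [hu.eventually (gt_mem_nhds hε)] with i hi x hx
  rw [dist_comm, dist_eq_norm]
  exact (h i x hx).trans_lt hi

noncomputable def orthoPoly (α β : ℤ → ℝ) (k : ℕ) : ℕ → ℝ[X]
  | 0 => 1
  | 1 => C (α k)⁻¹ * (X - C (β k))
  | n + 2 => C (α (k + n + 1))⁻¹ *
      ((X - C (β (k + n + 1))) * orthoPoly α β k (n + 1) - C (α (k + n)) * orthoPoly α β k n)

theorem eq_eval_orthoPoly {α β : ℤ → ℝ} (hα : ∀ j, α j ≠ 0) {W : ℕ → ℕ → ℝ → ℝ}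
    (hW0 : ∀ (k : ℕ) (x : ℝ), W k 0 x = 1)
    (hW1 : ∀ (k : ℕ) (x : ℝ), W k 1 x = (x - β k) / α k)
    (hWrec : ∀ k : ℕ, ∀ n : ℕ, 1 ≤ n → ∀ x : ℝ,
      α ((n : ℤ) + k - 1) * W k (n - 1) x + β ((n : ℤ) + k) * W k n x
        + α ((n : ℤ) + k) * W k (n + 1) x = x * W k n x)
    (k n : ℕ) : W k n = fun x => (orthoPoly α β k n).eval x := by
  induction n using Nat.strong_induction_on with
  | _ n ih =>
    funext x
    match n with
    | 0 => simp [orthoPoly, hW0]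
    | 1 => simp [orthoPoly, hW1, div_eq_inv_mul]
    | n + 2 =>
      have hrec := hWrec k (n + 1) (by omega) x
      rw [Nat.add_sub_cancel, ih n (by omega), ih (n + 1) (by omega)] at hrec
      simp only [orthoPoly, eval_mul, eval_C, eval_sub, eval_X]
      rw [eq_inv_mul_iff_mul_eq₀ (hα _)]
      push_cast at hrec ⊢
      ring_nf at hrec ⊢
      linarith

noncomputable def transferProductPoly (α β : ℤ → ℝ) (i m : ℕ) : Matrix (Fin 2) (Fin 2) ℝ[X] :=
  !![C (-(α (i - 1) / α i)) * orthoPoly α β (i + 1) m, orthoPoly α β i (m + 1);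
     C (-(α (i - 1) / α i)) * orthoPoly α β (i + 1) (m + 1), orthoPoly α β i (m + 2)]

theorem prodDescC_transferMatrixC_eq_map_aeval {α : ℤ → ℝ} (hα : ∀ j, α j ≠ 0) (β : ℤ → ℝ)
    (i m : ℕ) (z : ℂ) :
    prodDescC (fun j => transferMatrixC α β j z) i (m + 2)
      = (transferProductPoly α β i m).map (aeval z) := by
  have hαC : ∀ j, (α j : ℂ) ≠ 0 := fun j => Complex.ofReal_ne_zero.mpr (hα j)
  induction m with
  | zero =>
    ext a b
    fin_cases a <;> fin_cases b <;>
      simp [prodDescC, transferMatrixC, transferProductPoly, orthoPoly, Matrix.mul_apply]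
    all_goals field_simp
    ring
  | succ m ih =>
    ext a b
    rw [prodDescC, ih]
    fin_cases a <;> fin_cases b <;>
      simp [transferMatrixC, transferProductPoly, orthoPoly, Matrix.mul_apply] <;>
      field_simp <;> ring_nf

theorem stmt11_general (N : ℕ) (hN : 2 ≤ N)
    (α β : ℤ → ℝ) (hαpos : ∀ j, 0 < α j)
    -- `W k n` is the orthonormal polynomial `w_n^{[k]}` associated with the shifted sequences
    (W : ℕ → ℕ → ℝ → ℝ)
    (hW0 : ∀ (k : ℕ) (x : ℝ), W k 0 x = 1)
    (hW1 : ∀ (k : ℕ) (x : ℝ), W k 1 x = (x - β k) / α k)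
    (hWrec : ∀ k : ℕ, ∀ n : ℕ, 1 ≤ n → ∀ x : ℝ,
      α ((n : ℤ) + k - 1) * W k (n - 1) x + β ((n : ℤ) + k) * W k n x
        + α ((n : ℤ) + k) * W k (n + 1) x = x * W k n x)
    (i : ℕ) (γ : ℝ)
    (hX0 : prodDescC (fun j => transferMatrixC α β j 0) i N
      = (γ : ℂ) • (1 : Matrix (Fin 2) (Fin 2) ℂ))
    (ahat : ℕ → ℝ) (hahat : ∀ k, 0 < ahat k)
    (hlim : Filter.Tendsto ahat Filter.atTop Filter.atTop)
    -- `Chat k z` is the matrix `Ĉ^i_k(z) = â_k (𝒳̂^i(z/â_k) − γ Id)`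
    (Chat : ℕ → ℂ → Matrix (Fin 2) (Fin 2) ℂ)
    (hChat : ∀ (k : ℕ) (z : ℂ), Chat k z = (ahat k : ℂ) •
      (prodDescC (fun j => transferMatrixC α β j (z / (ahat k : ℂ))) i N
        - (γ : ℂ) • (1 : Matrix (Fin 2) (Fin 2) ℂ)))
    -- `Climit z` is the matrix `𝒞̂^i(z)`
    (Climit : ℂ → Matrix (Fin 2) (Fin 2) ℂ)
    (hClimit : ∀ z : ℂ, Climit z = z •
      !![(-(α ((i : ℤ) - 1) / α (i : ℤ)) * deriv (W (i + 1) (N - 2)) 0 : ℝ),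
          (deriv (W i (N - 1)) 0 : ℝ);
         (-(α ((i : ℤ) - 1) / α (i : ℤ)) * deriv (W (i + 1) (N - 1)) 0 : ℝ),
          (deriv (W i N) 0 : ℝ)].map (Complex.ofReal)) :
    ∀ K : Set ℂ, IsCompact K →
      TendstoUniformlyOn (fun k z => Chat k z) Climit Filter.atTop K ∧
      ∃ c : ℝ, 0 < c ∧ ∀ k : ℕ, ∀ z ∈ K,
        ‖Chat (k + 1) z - Chat k z‖ ≤ c * |1 / ahat (k + 1) - 1 / ahat k| := by
  intro K hK
  obtain ⟨m, rfl⟩ : ∃ m, N = m + 2 := ⟨N - 2, by omega⟩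
  have hα : ∀ j, α j ≠ 0 := fun j => (hαpos j).ne'
  set D := (transferProductPoly α β i m).map divX
  have hChat' : ∀ k z, Chat k z = z • D.map (aeval (z * ((ahat k)⁻¹ : ℝ))) := by
    intro k z
    have hP0 := (prodDescC_transferMatrixC_eq_map_aeval hα β i m 0).symm.trans hX0
    rw [hChat, prodDescC_transferMatrixC_eq_map_aeval hα, ← hP0,
      smul_map_aeval_div_sub_map_aeval_zero _ (Complex.ofReal_ne_zero.2 (hahat k).ne'),
      Complex.ofReal_inv, div_eq_mul_inv]
  have hClimit' : ∀ z, Climit z = z • D.map (aeval (z * ((0 : ℝ) : ℂ))) := by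
    intro z
    have hW := eq_eval_orthoPoly hα hW0 hW1 hWrec
    rw [hClimit, Complex.ofReal_zero, mul_zero]
    congr 1
    ext a b
    fin_cases a <;> fin_cases b <;>
      simp [D, transferProductPoly, aeval_zero_divX, hW, eval_zero_derivative, coeff_C_mul]
  have hinv := tendsto_inv_atTop_zero.comp hlim
  obtain ⟨T, hT⟩ := hinv.bddAbove_range
  have hTk : ∀ k, |(ahat k)⁻¹| ≤ T := fun k => by
    rw [abs_of_pos (inv_pos.2 (hahat k))]
    exact hT ⟨k, rfl⟩
  obtain ⟨c, hc, hcD⟩ := exists_norm_smul_map_aeval_mul_sub_le D hK T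
  refine ⟨tendstoUniformlyOn_of_norm_sub_le (u := fun k => c * (ahat k)⁻¹) ?_ fun k z hz => ?_,
    c, hc, fun k z hz => ?_⟩
  · simpa using hinv.const_mul c
  · simpa [hChat', hClimit', abs_of_pos (inv_pos.2 (hahat k))] using
      hcD z hz _ 0 (hTk k) (by simpa using (abs_nonneg _).trans (hTk 0))
  · simpa [hChat', one_div] using hcD z hz _ _ (hTk (k + 1)) (hTk k)

theorem stmt11 (N : ℕ) (hN : 2 ≤ N)
    (α β : ℤ → ℝ) (hαpos : ∀ j, 0 < α j)
    (hαper : ∀ j, α (j + N) = α j) (hβper : ∀ j, β (j + N) = β j)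
    -- `W k n` is the orthonormal polynomial `w_n^{[k]}` associated with the shifted sequences
    (W : ℕ → ℕ → ℝ → ℝ)
    (hW0 : ∀ (k : ℕ) (x : ℝ), W k 0 x = 1)
    (hW1 : ∀ (k : ℕ) (x : ℝ), W k 1 x = (x - β k) / α k)
    (hWrec : ∀ k : ℕ, ∀ n : ℕ, 1 ≤ n → ∀ x : ℝ,
      α ((n : ℤ) + k - 1) * W k (n - 1) x + β ((n : ℤ) + k) * W k n x
        + α ((n : ℤ) + k) * W k (n + 1) x = x * W k n x)
    (i : ℕ) (γ : ℝ)
    (hX0 : prodDescC (fun j => transferMatrixC α β j 0) i N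
      = (γ : ℂ) • (1 : Matrix (Fin 2) (Fin 2) ℂ))
    (ahat : ℕ → ℝ) (hahat : ∀ k, 0 < ahat k)
    (hlim : Filter.Tendsto ahat Filter.atTop Filter.atTop)
    -- `Chat k z` is the matrix `Ĉ^i_k(z) = â_k (𝒳̂^i(z/â_k) − γ Id)`
    (Chat : ℕ → ℂ → Matrix (Fin 2) (Fin 2) ℂ)
    (hChat : ∀ (k : ℕ) (z : ℂ), Chat k z = (ahat k : ℂ) •
      (prodDescC (fun j => transferMatrixC α β j (z / (ahat k : ℂ))) i N
        - (γ : ℂ) • (1 : Matrix (Fin 2) (Fin 2) ℂ)))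
    -- `Climit z` is the matrix `𝒞̂^i(z)`
    (Climit : ℂ → Matrix (Fin 2) (Fin 2) ℂ)
    (hClimit : ∀ z : ℂ, Climit z = z •
      !![(-(α ((i : ℤ) - 1) / α (i : ℤ)) * deriv (W (i + 1) (N - 2)) 0 : ℝ),
          (deriv (W i (N - 1)) 0 : ℝ);
         (-(α ((i : ℤ) - 1) / α (i : ℤ)) * deriv (W (i + 1) (N - 1)) 0 : ℝ),
          (deriv (W i N) 0 : ℝ)].map (Complex.ofReal)) :
    ∀ K : Set ℂ, IsCompact K →
      TendstoUniformlyOn (fun k z => Chat k z) Climit Filter.atTop K ∧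
      ∃ c : ℝ, 0 < c ∧ ∀ k : ℕ, ∀ z ∈ K,
        ‖Chat (k + 1) z - Chat k z‖ ≤ c * |1 / ahat (k + 1) - 1 / ahat k| :=
  stmt11_general N hN α β hαpos W hW0 hW1 hWrec i γ hX0 ahat hahat hlim Chat hChat Climit hClimit
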